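/- arXiv:1605.00481 — 2 statements merged into one kernel-verified Lean document; each statement's English description precedes it below -/
import Mathlib

section
/- Let a, b, c > 0 and define f(x,ξ) = e^{−π a x²} e^{−π b ξ²} e^{2πi c x·ξ} on R^{2d}, and let Φ(x,ξ) = e^{−π(x²+ξ²)}. Then the absolute value of the STFT of f with respect to Φ satisfies |V_Φ f(z,ζ)| = [(a+1)(b+1)+c²]^{−d/2} · exp(−π{[a(b+1)+c²]z₁² + [(a+1)b+c²]z₂² + (b+1)ζ₁² + (a+1)ζ₂² − 2c(z₁·ζ₂ + z₂·ζ₁)} / [(a+1)(b+1)+c²]), where z=(z₁,z₂), ζ=(ζ₁,ζ₂) ∈ R^{2d}. -/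
open MeasureTheory Complex
open scoped RealInnerProductSpace ENNReal NNReal

noncomputable section

abbrev Ed (d : ℕ) := EuclideanSpace ℝ (Fin d)

/-- `e2 t = e^{2 π i t}`. -/
def e2 (t : ℝ) : ℂ := Complex.exp (2 * Real.pi * t * Complex.I)

/-- Short-time Fourier transform on `ℝ^d` with window `g`:
`V_g f (x,ξ) = ∫ f(t) conj(g(t-x)) e^{-2πi ξ·t} dt`. -/
def STFT {d : ℕ} (g f : Ed d → ℂ) (x ξ : Ed d) : ℂ :=
  ∫ t, f t * starRingEnd ℂ (g (t - x)) * e2 (-⟪ξ, t⟫)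

/-- Cross-Wigner distribution
`W(f,g)(x,ξ) = ∫ f(x+t/2) conj(g(x-t/2)) e^{-2πi ξ·t} dt`. -/
def Wig {d : ℕ} (f g : Ed d → ℂ) (x ξ : Ed d) : ℂ :=
  ∫ t, f (x + (2:ℝ)⁻¹ • t) * starRingEnd ℂ (g (x - (2:ℝ)⁻¹ • t)) * e2 (-⟪ξ, t⟫)

/-- Cross-Wigner distribution as a function on `ℝ^{2d}`. -/
def WigF {d : ℕ} (f g : Ed d → ℂ) : Ed d × Ed d → ℂ := fun w => Wig f g w.1 w.2

/-- Cross-ambiguity function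
`A(f,g)(x,ξ) = ∫ e^{-2πi t·ξ} f(t+x/2) conj(g(t-x/2)) dt`. -/
def Amb {d : ℕ} (f g : Ed d → ℂ) (x ξ : Ed d) : ℂ :=
  ∫ t, e2 (-⟪t, ξ⟫) * f (t + (2:ℝ)⁻¹ • x) * starRingEnd ℂ (g (t - (2:ℝ)⁻¹ • x))

/-- STFT on `ℝ^{2d}` with window `Φ`. -/
def STFT2 {d : ℕ} (Φ F : Ed d × Ed d → ℂ) (z ζ : Ed d × Ed d) : ℂ :=
  ∫ t : Ed d × Ed d,
    F t * starRingEnd ℂ (Φ (t - z)) * e2 (-(⟪ζ.1, t.1⟫ + ⟪ζ.2, t.2⟫))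

/-- Standard Gaussian `e^{-π x²}` on `ℝ^d`. -/
def gauss {d : ℕ} : Ed d → ℂ := fun x => (Real.exp (-(Real.pi * ‖x‖ ^ 2)) : ℝ)

/-- Standard Gaussian `e^{-π (x²+ξ²)}` on `ℝ^{2d}`. -/
def gauss2 {d : ℕ} : Ed d × Ed d → ℂ :=
  fun w => (Real.exp (-(Real.pi * (‖w.1‖ ^ 2 + ‖w.2‖ ^ 2))) : ℝ)

/-- `L^p` "norm" of an `ℝ≥0∞`-valued function, `p ∈ [1,∞]`. -/
def lpE {α : Type*} [MeasureSpace α] (p : ℝ≥0∞) (f : α → ℝ≥0∞) : ℝ≥0∞ :=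
  if p = ∞ then essSup f volume
  else (∫⁻ x, f x ^ p.toReal) ^ (1 / p.toReal)

/-- Weighted modulation space norm `M^{p,q}_m(ℝ^d)` (Gaussian window):
first integrate in `x` with exponent `p`, then in `ξ` with exponent `q`,
against the weight `m x ξ`. -/
def Mnorm {d : ℕ} (p q : ℝ≥0∞) (m : Ed d → Ed d → ℝ) (f : Ed d → ℂ) : ℝ≥0∞ :=
  lpE q fun ξ => lpE p fun x => (‖STFT gauss f x ξ‖₊ : ℝ≥0∞) * ENNReal.ofReal (m x ξ)

/-- Weighted modulation space norm `M^{p,q}_m(ℝ^{2d})` (Gaussian window). -/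
def M2norm {d : ℕ} (p q : ℝ≥0∞) (m : Ed d × Ed d → (Ed d × Ed d) → ℝ)
    (F : Ed d × Ed d → ℂ) : ℝ≥0∞ :=
  lpE q fun ζ => lpE p fun z =>
    (‖STFT2 gauss2 F z ζ‖₊ : ℝ≥0∞) * ENNReal.ofReal (m z ζ)

/-- The polynomial weight `v_s(z) = (1+|z|²)^{s/2}` on `ℝ^{2d}`. -/
def vs {d : ℕ} (s : ℝ) (w : Ed d × Ed d) : ℝ := (1 + (‖w.1‖ ^ 2 + ‖w.2‖ ^ 2)) ^ (s / 2)

/-- The weight `v_s` on phase space `ℝ^d × ℝ^d`, as a function of two variables. -/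
def vs1 {d : ℕ} (s : ℝ) (x ξ : Ed d) : ℝ := (1 + (‖x‖ ^ 2 + ‖ξ‖ ^ 2)) ^ (s / 2)

/-! The integrand of `V_Φ f` is a Gaussian on `ℝ^d × ℝ^d` in which the two variables are
coupled only through the purely imaginary twist `γ ⟪x, y⟫ i`. Integrating out `y` by the
Gaussian integral with a complex linear term leaves a Gaussian in `x` with the larger
parameter `α + γ² / 4β`; a second such integral and taking moduli give the formula, with
`4αβ + γ² = 4π² ((a + 1)(b + 1) + c²)` for `α = π(a + 1)`, `β = π(b + 1)`, `γ = 2πc`. -/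

open Real Module

section TwistedGaussian

variable {V : Type*} [NormedAddCommGroup V] [InnerProductSpace ℝ V]

def twistedGaussian (α β γ : ℝ) (p q r s x y : V) : ℂ :=
  cexp (-α * ‖x‖ ^ 2 - β * ‖y‖ ^ 2 + ⟪p, x⟫ + ⟪q, y⟫ + (γ * ⟪x, y⟫ + ⟪r, x⟫ + ⟪s, y⟫) * I)

variable [FiniteDimensional ℝ V] [MeasurableSpace V] [BorelSpace V]

theorem integral_cexp_neg_mul_sq_norm_add_inner_add_inner_mul_I {B : ℝ} (hB : 0 < B)
    (u w : V) :
    ∫ v : V, cexp (-B * ‖v‖ ^ 2 + ⟪u, v⟫ + ⟪w, v⟫ * I) =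
      ((π / B) ^ (finrank ℝ V / 2 : ℝ) : ℝ) *
        cexp (((‖u‖ ^ 2 - ‖w‖ ^ 2) / (4 * B) : ℝ) + ((⟪u, w⟫ / (2 * B) : ℝ) : ℂ) * I) := by
  have hB' : 0 < (B : ℂ).re := by simpa using hB
  -- translating by the real centre `u / 2B` removes the real linear term
  set s : V := (2 * B)⁻¹ • u
  have hshift : ∀ v : V, cexp (-B * ‖v + s‖ ^ 2 + ⟪u, v + s⟫ + ⟪w, v + s⟫ * I) =
      cexp (‖u‖ ^ 2 / (4 * B) + ⟪u, w⟫ / (2 * B) * I) * cexp (-B * ‖v‖ ^ 2 + I * ⟪w, v⟫) := by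
    intro v
    have hre : -B * ‖v + s‖ ^ 2 + ⟪u, v + s⟫ = ‖u‖ ^ 2 / (4 * B) + -B * ‖v‖ ^ 2 := by
      simp only [s, norm_add_sq_real, inner_add_right, inner_smul_right, norm_smul,
        real_inner_self_eq_norm_sq, real_inner_comm v u, Real.norm_eq_abs,
        abs_of_pos (by positivity : 0 < (2 * B)⁻¹)]
      field_simp
      ring
    have him : ⟪w, v + s⟫ = ⟪u, w⟫ / (2 * B) + ⟪w, v⟫ := by
      simp only [s, inner_add_right, inner_smul_right, real_inner_comm u w]
      field_simp
      ring
    rw [← Complex.exp_add]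
    congr 1
    have hre' := congrArg (fun x : ℝ => (x : ℂ)) hre
    have him' := congrArg (fun x : ℝ => (x : ℂ)) him
    push_cast at hre' him'
    linear_combination hre' + I * him'
  rw [← integral_add_right_eq_self _ s]
  simp only [hshift, integral_const_mul, GaussianFourier.integral_cexp_neg_mul_sq_norm_add hB',
    Complex.ofReal_cpow (by positivity : 0 ≤ π / B)]
  rw [mul_left_comm, ← Complex.exp_add]
  push_cast
  congr 2
  rw [I_sq]
  ring

variable {α β : ℝ} (γ : ℝ) (p q r s : V)

theorem integrable_twistedGaussian (hα : 0 < α) (hβ : 0 < β) :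
    Integrable (fun z : V × V => twistedGaussian α β γ p q r s z.1 z.2) := by
  have hx := GaussianFourier.integrable_cexp_neg_mul_sq_norm_add (V := V) (b := α)
    (by simpa using hα) 1 p
  have hy := GaussianFourier.integrable_cexp_neg_mul_sq_norm_add (V := V) (b := β)
    (by simpa using hβ) 1 q
  refine (hx.mul_prod hy).mono ?_ (.of_forall fun z => le_of_eq ?_)
  · unfold twistedGaussian
    fun_prop
  · have hphase : twistedGaussian α β γ p q r s z.1 z.2 =
        cexp (-α * ‖z.1‖ ^ 2 + 1 * ⟪p, z.1⟫) * cexp (-β * ‖z.2‖ ^ 2 + 1 * ⟪q, z.2⟫) *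
          cexp (((γ * ⟪z.1, z.2⟫ + ⟪r, z.1⟫ + ⟪s, z.2⟫ : ℝ) : ℂ) * I) := by
      rw [twistedGaussian, ← Complex.exp_add, ← Complex.exp_add]
      push_cast
      ring_nf
    rw [hphase, norm_mul, Complex.norm_exp_ofReal_mul_I, mul_one]

theorem integral_twistedGaussian_snd (hβ : 0 < β) (x : V) :
    ∫ y, twistedGaussian α β γ p q r s x y =
      ((π / β) ^ (finrank ℝ V / 2 : ℝ) : ℝ) *
        cexp (((‖q‖ ^ 2 - ‖s‖ ^ 2) / (4 * β) : ℝ) + ((⟪q, s⟫ / (2 * β) : ℝ) : ℂ) * I) *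
        cexp (-((α + γ ^ 2 / (4 * β) : ℝ) : ℂ) * ‖x‖ ^ 2 + ⟪p - (γ / (2 * β)) • s, x⟫ +
          ⟪r + (γ / (2 * β)) • q, x⟫ * I) := by
  have hsplit : ∀ y, twistedGaussian α β γ p q r s x y =
      cexp (-α * ‖x‖ ^ 2 + ⟪p, x⟫ + ⟪r, x⟫ * I) *
        cexp (-β * ‖y‖ ^ 2 + ⟪q, y⟫ + ⟪γ • x + s, y⟫ * I) := by
    intro y
    rw [twistedGaussian, ← Complex.exp_add, inner_add_left, real_inner_smul_left]
    push_cast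
    ring_nf
  simp only [hsplit, integral_const_mul,
    integral_cexp_neg_mul_sq_norm_add_inner_add_inner_mul_I hβ]
  rw [mul_left_comm, ← Complex.exp_add, mul_assoc, ← Complex.exp_add]
  congr 2
  have hre : -α * ‖x‖ ^ 2 + ⟪p, x⟫ + (‖q‖ ^ 2 - ‖γ • x + s‖ ^ 2) / (4 * β) =
      (‖q‖ ^ 2 - ‖s‖ ^ 2) / (4 * β) + (-(α + γ ^ 2 / (4 * β)) * ‖x‖ ^ 2 +
        ⟪p - (γ / (2 * β)) • s, x⟫) := by
    simp only [norm_add_sq_real, norm_smul, inner_sub_left, real_inner_smul_left,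
      Real.norm_eq_abs, mul_pow, sq_abs, real_inner_comm x s]
    field_simp
    ring
  have him : ⟪r, x⟫ + ⟪q, γ • x + s⟫ / (2 * β) =
      ⟪q, s⟫ / (2 * β) + ⟪r + (γ / (2 * β)) • q, x⟫ := by
    simp only [inner_add_left, inner_add_right, real_inner_smul_left, real_inner_smul_right,
      real_inner_comm x q]
    field_simp
    ring
  have hre' := congrArg (fun x : ℝ => (x : ℂ)) hre
  have him' := congrArg (fun x : ℝ => (x : ℂ)) him
  push_cast at hre' him' ⊢
  linear_combination hre' + I * him'

theorem norm_integral_twistedGaussian (hα : 0 < α) (hβ : 0 < β) :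
    ‖∫ z : V × V, twistedGaussian α β γ p q r s z.1 z.2‖ =
      (4 * π ^ 2 / (4 * α * β + γ ^ 2)) ^ (finrank ℝ V / 2 : ℝ) *
        rexp ((β * (‖p‖ ^ 2 - ‖r‖ ^ 2) + α * (‖q‖ ^ 2 - ‖s‖ ^ 2) -
          γ * (⟪p, s⟫ + ⟪q, r⟫)) / (4 * α * β + γ ^ 2)) := by
  have hα' : 0 < α + γ ^ 2 / (4 * β) := by positivity
  rw [Measure.volume_eq_prod, integral_prod _ (integrable_twistedGaussian γ p q r s hα hβ)]
  simp only [integral_twistedGaussian_snd γ p q r s hβ, integral_const_mul,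
    integral_cexp_neg_mul_sq_norm_add_inner_add_inner_mul_I hα']
  simp only [norm_mul, Complex.norm_real, Complex.exp_add, Complex.norm_exp_ofReal,
    Complex.norm_exp_ofReal_mul_I, mul_one,
    Real.norm_of_nonneg (Real.rpow_nonneg (by positivity : 0 ≤ π / β) _),
    Real.norm_of_nonneg (Real.rpow_nonneg (by positivity : 0 ≤ π / (α + γ ^ 2 / (4 * β))) _)]
  rw [mul_mul_mul_comm, ← Real.mul_rpow (by positivity) (by positivity), ← Real.exp_add]
  congr 2
  · field_simp
  · simp only [norm_add_sq_real, norm_sub_sq_real, norm_smul, real_inner_smul_right,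
      Real.norm_eq_abs, mul_pow, sq_abs, real_inner_comm q r]
    field_simp
    ring

end TwistedGaussian

theorem stft2_gauss2_eq_integral_twistedGaussian {d : ℕ} (a b c : ℝ) (z ζ : Ed d × Ed d) :
    STFT2 gauss2
        (fun w : Ed d × Ed d =>
          ((Real.exp (-(Real.pi * a * ‖w.1‖ ^ 2)) : ℝ) : ℂ) *
            (Real.exp (-(Real.pi * b * ‖w.2‖ ^ 2)) : ℝ) * e2 (c * ⟪w.1, w.2⟫)) z ζ =
      cexp ((-(π * (‖z.1‖ ^ 2 + ‖z.2‖ ^ 2)) : ℝ) : ℂ) *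
        ∫ t : Ed d × Ed d, twistedGaussian (π * (a + 1)) (π * (b + 1)) (2 * π * c)
          ((2 * π) • z.1) ((2 * π) • z.2) (-(2 * π) • ζ.1) (-(2 * π) • ζ.2) t.1 t.2 := by
  rw [STFT2, ← integral_const_mul]
  congr 1 with t
  simp only [gauss2, Complex.conj_ofReal]
  simp only [twistedGaussian, e2, Prod.fst_sub, Prod.snd_sub, Complex.ofReal_exp,
    ← Complex.exp_add]
  congr 1
  simp only [norm_sub_sq_real, real_inner_smul_left, real_inner_comm t.1 z.1,
    real_inner_comm t.2 z.2]
  push_cast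
  ring

theorem stft_generalized_gaussian_general (d : ℕ) (a b c : ℝ) (ha : 0 < a) (hb : 0 < b) :
    ∀ z ζ : Ed d × Ed d,
      ‖STFT2 gauss2
          (fun w : Ed d × Ed d =>
            ((Real.exp (-(Real.pi * a * ‖w.1‖ ^ 2)) : ℝ) : ℂ) *
              (Real.exp (-(Real.pi * b * ‖w.2‖ ^ 2)) : ℝ) * e2 (c * ⟪w.1, w.2⟫)) z ζ‖ =
        ((a + 1) * (b + 1) + c ^ 2) ^ (-(d : ℝ) / 2) *
          Real.exp (-(Real.pi *
            ((a * (b + 1) + c ^ 2) * ‖z.1‖ ^ 2 + ((a + 1) * b + c ^ 2) * ‖z.2‖ ^ 2 +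
              (b + 1) * ‖ζ.1‖ ^ 2 + (a + 1) * ‖ζ.2‖ ^ 2 -
              2 * c * (⟪z.1, ζ.2⟫ + ⟪z.2, ζ.1⟫)) /
            ((a + 1) * (b + 1) + c ^ 2))) := by
  intro z ζ
  have hK : 0 < (a + 1) * (b + 1) + c ^ 2 := by positivity
  rw [stft2_gauss2_eq_integral_twistedGaussian, norm_mul,
    norm_integral_twistedGaussian _ _ _ _ _ (by positivity) (by positivity),
    finrank_euclideanSpace_fin, Complex.norm_exp_ofReal, mul_left_comm, ← Real.exp_add]
  congr 1
  · rw [show 4 * π ^ 2 / (4 * (π * (a + 1)) * (π * (b + 1)) + (2 * π * c) ^ 2) =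
        ((a + 1) * (b + 1) + c ^ 2)⁻¹ by field_simp; ring,
      Real.inv_rpow hK.le, ← Real.rpow_neg hK.le, neg_div]
  · congr 1
    simp only [norm_smul, norm_neg, real_inner_smul_left, real_inner_smul_right, Real.norm_eq_abs,
      mul_pow, sq_abs]
    field_simp
    ring

/-- Modulus of the STFT of a generalized Gaussian with Gaussian window. -/
theorem stft_generalized_gaussian (d : ℕ) (a b c : ℝ) (ha : 0 < a) (hb : 0 < b) (hc : 0 < c) :
    ∀ z ζ : Ed d × Ed d,
      ‖STFT2 gauss2
          (fun w : Ed d × Ed d =>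
            ((Real.exp (-(Real.pi * a * ‖w.1‖ ^ 2)) : ℝ) : ℂ) *
              (Real.exp (-(Real.pi * b * ‖w.2‖ ^ 2)) : ℝ) * e2 (c * ⟪w.1, w.2⟫)) z ζ‖ =
        ((a + 1) * (b + 1) + c ^ 2) ^ (-(d : ℝ) / 2) *
          Real.exp (-(Real.pi *
            ((a * (b + 1) + c ^ 2) * ‖z.1‖ ^ 2 + ((a + 1) * b + c ^ 2) * ‖z.2‖ ^ 2 +
              (b + 1) * ‖ζ.1‖ ^ 2 + (a + 1) * ‖ζ.2‖ ^ 2 -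
              2 * c * (⟪z.1, ζ.2⟫ + ⟪z.2, ζ.1⟫)) /
            ((a + 1) * (b + 1) + c ^ 2))) :=
  stft_generalized_gaussian_general d a b c ha hb

end
end

section
/- For all λ > 0 and 1 ≤ r, s ≤ ∞, the modulation space norm of the dilated Gaussian φ_λ(x) = e^{−π λ x²} on R^d satisfies ||φ_λ||_{M^{r,s}} ≍ λ^{−d/(2r)} (λ+1)^{−(d/2)(1 − 1/r − 1/s)}, with implied constants independent of λ. -/
open MeasureTheory Complex
open scoped RealInnerProductSpace ENNReal NNReal

noncomputable section

/-! The short-time Fourier transform of a Gaussian against a Gaussian window is again a Gaussian: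
completing the square, `λ|t|² + |t - x|² = (λ+1)|t - x/(λ+1)|² + λ/(λ+1)|x|²`, gives
`|V_g φ_λ(x, ξ)| = (λ+1)^(-d/2) e^(-π λ/(λ+1) |x|²) e^(-π |ξ|²/(λ+1))`.
The mixed norm of this product factors, and `‖e^(-π c |·|²)‖_{L^p} = (p c)^(-d/(2p))`, so the
`M^{r,s}` norm is exactly `r^(-d/(2r)) s^(-d/(2s)) λ^(-d/(2r)) (λ+1)^(-(d/2)(1 - 1/r - 1/s))`. -/

open Real

theorem Continuous.essSup_eq_iSup {α β : Type*} [TopologicalSpace α] [MeasurableSpace α]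
    {μ : Measure α} [μ.IsOpenPosMeasure] [CompleteLinearOrder β] [TopologicalSpace β]
    [OrderTopology β] {f : α → β} (hf : Continuous f) : essSup f μ = ⨆ x, f x :=
  (iSup_eq_essSup fun x _ hx ↦ (isOpen_lt continuous_const hf).measure_ne_zero μ ⟨x, hx⟩).symm

theorem lpE_const_mul {α : Type*} [MeasureSpace α] {p : ℝ≥0∞} (hp : p ≠ 0) {C : ℝ≥0∞}
    (hC : C ≠ ∞) (f : α → ℝ≥0∞) : lpE p (fun x ↦ C * f x) = C * lpE p f := by
  rcases eq_or_ne p ∞ with rfl | hp_top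
  · simp only [lpE, if_true, ENNReal.essSup_const_mul]
  have hp_pos : 0 < p.toReal := ENNReal.toReal_pos hp hp_top
  simp only [lpE, if_neg hp_top, ENNReal.mul_rpow_of_nonneg _ _ hp_pos.le]
  rw [lintegral_const_mul' _ _ (ENNReal.rpow_ne_top_of_nonneg hp_pos.le hC),
    ENNReal.mul_rpow_of_nonneg _ _ (by positivity), ← ENNReal.rpow_mul,
    mul_one_div_cancel hp_pos.ne', ENNReal.rpow_one]

section Gaussian

variable {V : Type*} [NormedAddCommGroup V] [InnerProductSpace ℝ V] [FiniteDimensional ℝ V]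
  [MeasurableSpace V] [BorelSpace V]

theorem integrable_rexp_neg_mul_sq_norm {b : ℝ} (hb : 0 < b) :
    Integrable (fun v : V ↦ rexp (-b * ‖v‖ ^ 2)) := by
  refine (GaussianFourier.integrable_cexp_neg_mul_sq_norm_add (V := V) (b := b)
    (by simpa using hb) 0 0).norm.congr (.of_forall fun v ↦ ?_)
  simp [Complex.norm_exp, ← Complex.ofReal_pow]

/-- At `p = ∞` the right-hand side is `(0 * c) ^ 0 = 1`, as `∞.toReal = 0`. -/
theorem lpE_gaussian {p : ℝ≥0∞} (hp : p ≠ 0) {c : ℝ} (hc : 0 < c) :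
    lpE p (fun v : V ↦ ENNReal.ofReal (rexp (-(π * c * ‖v‖ ^ 2)))) =
      ENNReal.ofReal ((p.toReal * c) ^ (-(Module.finrank ℝ V : ℝ) / (2 * p.toReal))) := by
  rcases eq_or_ne p ∞ with rfl | hp_top
  · have h_cont : Continuous fun v : V ↦ ENNReal.ofReal (rexp (-(π * c * ‖v‖ ^ 2))) :=
      ENNReal.continuous_ofReal.comp (by fun_prop)
    rw [lpE, if_pos rfl, h_cont.essSup_eq_iSup]
    refine le_antisymm (iSup_le fun v ↦ ?_) (le_iSup_of_le 0 (by simp))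
    simp [show 0 ≤ π * c * ‖v‖ ^ 2 by positivity]
  have hp_pos : 0 < p.toReal := ENNReal.toReal_pos hp hp_top
  have h_pow (v : V) : ENNReal.ofReal (rexp (-(π * c * ‖v‖ ^ 2))) ^ p.toReal =
      ENNReal.ofReal (rexp (-(π * (p.toReal * c)) * ‖v‖ ^ 2)) := by
    rw [ENNReal.ofReal_rpow_of_pos (exp_pos _), ← exp_mul]
    ring_nf
  simp only [lpE, if_neg hp_top, h_pow]
  rw [← ofReal_integral_eq_lintegral_ofReal (integrable_rexp_neg_mul_sq_norm (by positivity))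
      (.of_forall fun _ ↦ (exp_pos _).le),
    GaussianFourier.integral_rexp_neg_mul_sq_norm (by positivity),
    ENNReal.ofReal_rpow_of_nonneg (by positivity) (by positivity), ← rpow_mul (by positivity)]
  congr 1
  rw [div_mul_cancel_left₀ pi_ne_zero, inv_rpow (by positivity), ← rpow_neg (by positivity)]
  ring_nf

end Gaussian

theorem mul_norm_sq_add_norm_sub_sq {E : Type*} [NormedAddCommGroup E] [InnerProductSpace ℝ E]
    {a : ℝ} (ha : a + 1 ≠ 0) (t x : E) :
    a * ‖t‖ ^ 2 + ‖t - x‖ ^ 2 = (a + 1) * ‖t - (a + 1)⁻¹ • x‖ ^ 2 + a / (a + 1) * ‖x‖ ^ 2 := by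
  rw [norm_sub_sq_real, norm_sub_sq_real, inner_smul_right, norm_smul, mul_pow,
    Real.norm_eq_abs, sq_abs]
  field_simp
  ring

theorem norm_stft_gauss_dilated {d : ℕ} {lam : ℝ} (hlam : 0 < lam) (x ξ : Ed d) :
    ‖STFT gauss (fun t : Ed d ↦ (rexp (-(π * lam * ‖t‖ ^ 2)) : ℂ)) x ξ‖ =
      (lam + 1) ^ (-(d : ℝ) / 2) * rexp (-(π * (lam / (lam + 1)) * ‖x‖ ^ 2)) *
        rexp (-(π * (lam + 1)⁻¹ * ‖ξ‖ ^ 2)) := by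
  have hlam1 : 0 < lam + 1 := by linarith
  set b : ℂ := ((π * (lam + 1) : ℝ) : ℂ) with hb
  set c : ℂ := -(2 * π * Complex.I) with hc
  set a : Ed d := (lam + 1)⁻¹ • x
  set K : ℂ := cexp (c * ⟪ξ, a⟫ - ((π * (lam / (lam + 1)) * ‖x‖ ^ 2 : ℝ) : ℂ)) with hK
  have h_integrand (t : Ed d) :
      (rexp (-(π * lam * ‖t‖ ^ 2)) : ℂ) * starRingEnd ℂ (gauss (t - x)) * e2 (-⟪ξ, t⟫) =
        cexp (-b * ‖t - a‖ ^ 2 + c * ⟪ξ, t - a⟫) * K := by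
    have h_sq := congrArg (fun r : ℝ ↦ (r : ℂ))
      (mul_norm_sq_add_norm_sub_sq hlam1.ne' t x)
    simp only [gauss, Complex.conj_ofReal]
    simp only [e2, Complex.ofReal_exp, hK, hb, hc, ← Complex.exp_add, inner_sub_right]
    congr 1
    push_cast at h_sq ⊢
    linear_combination -(π : ℂ) * h_sq
  have h_shift : STFT gauss (fun t : Ed d ↦ (rexp (-(π * lam * ‖t‖ ^ 2)) : ℂ)) x ξ =
      (∫ t : Ed d, cexp (-b * ‖t‖ ^ 2 + c * ⟪ξ, t⟫)) * K := by
    rw [STFT, ← integral_mul_const,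
      ← integral_sub_right_eq_self (fun t ↦ cexp (-b * ‖t‖ ^ 2 + c * ⟪ξ, t⟫) * K) a]
    simp only [h_integrand]
  have h_prefactor : ‖(π / b : ℂ) ^ (Module.finrank ℝ (Ed d) / 2 : ℂ)‖ =
      (lam + 1) ^ (-(d : ℝ) / 2) := by
    have h_base : (π / b : ℂ) = (((lam + 1)⁻¹ : ℝ) : ℂ) := by
      rw [hb]
      push_cast
      field_simp
    rw [h_base, finrank_euclideanSpace_fin, ← Complex.ofReal_natCast, ← Complex.ofReal_ofNat,
      ← Complex.ofReal_div, Complex.norm_cpow_eq_rpow_re_of_pos (by positivity),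
      Complex.ofReal_re, inv_rpow hlam1.le, ← rpow_neg hlam1.le, neg_div]
  have h_frequency : ‖cexp (c ^ 2 * ‖ξ‖ ^ 2 / (4 * b))‖ = rexp (-(π * (lam + 1)⁻¹ * ‖ξ‖ ^ 2)) := by
    have h_real : c ^ 2 * ‖ξ‖ ^ 2 / (4 * b) = ((-(π * (lam + 1)⁻¹ * ‖ξ‖ ^ 2) : ℝ) : ℂ) := by
      rw [hc, hb]
      push_cast
      field_simp
      ring_nf
      simp [Complex.I_sq]
    rw [h_real, ← Complex.ofReal_exp, Complex.norm_real, norm_of_nonneg (exp_pos _).le]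
  have h_position : ‖K‖ = rexp (-(π * (lam / (lam + 1)) * ‖x‖ ^ 2)) := by
    rw [hK, Complex.norm_exp, Complex.sub_re, Complex.ofReal_re]
    simp [hc]
  have hb_re : 0 < b.re := by rw [hb, Complex.ofReal_re]; positivity
  rw [h_shift, GaussianFourier.integral_cexp_neg_mul_sq_norm_add hb_re c ξ, norm_mul, norm_mul,
    h_prefactor, h_frequency, h_position]
  ring

theorem Real.rpow_div_mul_self_pos {x : ℝ} (hx : 0 ≤ x) (a b : ℝ) : 0 < x ^ (a / (b * x)) := by
  rcases hx.eq_or_lt with rfl | hx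
  · simp
  · exact rpow_pos_of_pos hx _

theorem dilated_gaussian_rpow_identity {n p q lam : ℝ} (hp : 0 ≤ p) (hq : 0 ≤ q) (hlam : 0 < lam) :
    (lam + 1) ^ (-n / 2) * (p * (lam / (lam + 1))) ^ (-n / (2 * p)) *
        (q * (lam + 1)⁻¹) ^ (-n / (2 * q)) =
      p ^ (-n / (2 * p)) * q ^ (-n / (2 * q)) *
        (lam ^ (-n / (2 * p)) * (lam + 1) ^ (-(n / 2) * (1 - 1 / p - 1 / q))) := by
  have hlam1 : 0 < lam + 1 := by linarith
  have h_exp : -(n / 2) * (1 - 1 / p - 1 / q) = -n / 2 + -(-n / (2 * p)) + -(-n / (2 * q)) := by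
    ring
  rw [mul_rpow hp (by positivity), mul_rpow hq (by positivity), div_rpow hlam.le hlam1.le,
    inv_rpow hlam1.le, h_exp, rpow_add hlam1, rpow_add hlam1, rpow_neg hlam1.le,
    rpow_neg hlam1.le]
  ring

theorem Mnorm_dilated_gaussian {d : ℕ} {r s : ℝ≥0∞} (hr : r ≠ 0) (hs : s ≠ 0) {lam : ℝ}
    (hlam : 0 < lam) :
    Mnorm r s (fun _ _ ↦ 1) (fun x : Ed d ↦ (rexp (-(π * lam * ‖x‖ ^ 2)) : ℂ)) =
      ENNReal.ofReal (r.toReal ^ (-(d : ℝ) / (2 * r.toReal)) *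
          s.toReal ^ (-(d : ℝ) / (2 * s.toReal))) *
        ENNReal.ofReal (lam ^ (-(d : ℝ) / (2 * r.toReal)) *
          (lam + 1) ^ (-((d : ℝ) / 2) * (1 - 1 / r.toReal - 1 / s.toReal))) := by
  have hlam1 : 0 < lam + 1 := by linarith
  set A := ENNReal.ofReal ((lam + 1) ^ (-(d : ℝ) / 2))
  have h_inner (ξ : Ed d) :
      lpE r (fun x ↦ (‖STFT gauss (fun t : Ed d ↦ (rexp (-(π * lam * ‖t‖ ^ 2)) : ℂ)) x ξ‖₊ :
        ℝ≥0∞) * ENNReal.ofReal 1) =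
      A * ENNReal.ofReal ((r.toReal * (lam / (lam + 1))) ^ (-(d : ℝ) / (2 * r.toReal))) *
        ENNReal.ofReal (rexp (-(π * (lam + 1)⁻¹ * ‖ξ‖ ^ 2))) := by
    have h_point (x : Ed d) :
        (‖STFT gauss (fun t : Ed d ↦ (rexp (-(π * lam * ‖t‖ ^ 2)) : ℂ)) x ξ‖₊ : ℝ≥0∞) *
          ENNReal.ofReal 1 =
        A * ENNReal.ofReal (rexp (-(π * (lam + 1)⁻¹ * ‖ξ‖ ^ 2))) *
          ENNReal.ofReal (rexp (-(π * (lam / (lam + 1)) * ‖x‖ ^ 2))) := by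
      rw [ENNReal.ofReal_one, mul_one, ← enorm_eq_nnnorm, ← ofReal_norm,
        norm_stft_gauss_dilated hlam, ENNReal.ofReal_mul (by positivity),
        ENNReal.ofReal_mul (by positivity)]
      ring
    simp only [h_point]
    rw [lpE_const_mul hr (by finiteness), lpE_gaussian hr (by positivity),
      finrank_euclideanSpace_fin]
    ring
  simp only [Mnorm, h_inner]
  rw [lpE_const_mul hs (by finiteness), lpE_gaussian hs (by positivity),
    finrank_euclideanSpace_fin, ← ENNReal.ofReal_mul (by positivity),
    ← ENNReal.ofReal_mul (by positivity), dilated_gaussian_rpow_identity ENNReal.toReal_nonneg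
      ENNReal.toReal_nonneg hlam, ENNReal.ofReal_mul (by positivity)]

/-- The convention `1/∞ = 0` is realized via `ENNReal.toReal`. -/
theorem modulation_norm_dilated_gaussian (d : ℕ) (r s : ℝ≥0∞) (hr : 1 ≤ r) (hs : 1 ≤ s) :
    ∃ C1 C2 : ℝ≥0∞, 0 < C1 ∧ C2 < ∞ ∧
      ∀ lam : ℝ, 0 < lam →
        C1 * ENNReal.ofReal
            (lam ^ (-(d : ℝ) / (2 * r.toReal)) *
              (lam + 1) ^ (-((d : ℝ) / 2) * (1 - 1 / r.toReal - 1 / s.toReal))) ≤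
          Mnorm r s (fun _ _ => 1)
            (fun x : Ed d => (Real.exp (-(Real.pi * lam * ‖x‖ ^ 2)) : ℂ)) ∧
        Mnorm r s (fun _ _ => 1)
            (fun x : Ed d => (Real.exp (-(Real.pi * lam * ‖x‖ ^ 2)) : ℂ)) ≤
          C2 * ENNReal.ofReal
            (lam ^ (-(d : ℝ) / (2 * r.toReal)) *
              (lam + 1) ^ (-((d : ℝ) / 2) * (1 - 1 / r.toReal - 1 / s.toReal))) := by
  have hr0 : r ≠ 0 := (one_pos.trans_le hr).ne'
  have hs0 : s ≠ 0 := (one_pos.trans_le hs).ne'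
  set C := ENNReal.ofReal (r.toReal ^ (-(d : ℝ) / (2 * r.toReal)) *
    s.toReal ^ (-(d : ℝ) / (2 * s.toReal)))
  have hC : 0 < C := ENNReal.ofReal_pos.mpr <| mul_pos
    (rpow_div_mul_self_pos ENNReal.toReal_nonneg _ _)
    (rpow_div_mul_self_pos ENNReal.toReal_nonneg _ _)
  refine ⟨C, C, hC, ENNReal.ofReal_lt_top, fun lam hlam ↦ ?_⟩
  rw [Mnorm_dilated_gaussian hr0 hs0 hlam]
  exact ⟨le_rfl, le_rfl⟩
end
end
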